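/- Let g:ℝ^d→ℝ be L-smooth, t > 0, and u uniformly distributed on the unit sphere S_{d−1}. Then for any x, y ∈ ℝ^d, E_u‖∇̂g(x;u) − ∇̂g(y;u)‖² ≤ (3/2)d²L²t² + 3dL²‖x − y‖², where ∇̂g(z;u) := d·(g(z+tu) − g(z−tu))/(2t)·u. -/

import Mathlib

open MeasureTheory ProbabilityTheory Metric Finset
open scoped RealInnerProductSpace ENNReal BigOperators Pointwise

noncomputable section

/-- A function `f : ℝ^d → ℝ` is `L`-smooth if it is differentiable and its gradient
is `L`-Lipschitz: `‖∇f(x) - ∇f(y)‖ ≤ L‖x - y‖` for all `x, y`. -/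
def LSmooth {d : ℕ} (L : ℝ) (f : EuclideanSpace ℝ (Fin d) → ℝ) : Prop :=
  Differentiable ℝ f ∧ ∀ x y, ‖gradient f x - gradient f y‖ ≤ L * ‖x - y‖

/-- The uniform probability distribution on the unit sphere `S_{d-1} ⊂ ℝ^d`,
obtained by normalizing the surface measure `volume.toSphere`. -/
def uniformSphere (d : ℕ) : Measure (EuclideanSpace ℝ (Fin d)) :=
  ((volume : Measure (EuclideanSpace ℝ (Fin d))).toSphere Set.univ)⁻¹ •
    Measure.map Subtype.val (volume : Measure (EuclideanSpace ℝ (Fin d))).toSphere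

/-- The uniform probability distribution on the closed unit ball `B^d ⊂ ℝ^d`
(normalized Lebesgue measure). -/
def uniformBall (d : ℕ) : Measure (EuclideanSpace ℝ (Fin d)) :=
  ((volume : Measure (EuclideanSpace ℝ (Fin d))) (Metric.closedBall 0 1))⁻¹ •
    (volume : Measure (EuclideanSpace ℝ (Fin d))).restrict (Metric.closedBall 0 1)

/-- The two-point zeroth-order gradient estimator
`d * (F(y + t·u; ξ) - F(y - t·u; ξ)) / (2t) • u`. -/
def est {d : ℕ} {Ξ : Type*} (Fi : EuclideanSpace ℝ (Fin d) → Ξ → ℝ) (tk : ℝ)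
    (y uu : EuclideanSpace ℝ (Fin d)) (zz : Ξ) : EuclideanSpace ℝ (Fin d) :=
  ((d : ℝ) * ((Fi (y + tk • uu) zz - Fi (y - tk • uu) zz) / (2 * tk))) • uu

/-- The spectral norm (`ℓ²` operator norm) of a real `n × n` matrix. -/
def specNorm {n : ℕ} (M : Matrix (Fin n) (Fin n) ℝ) : ℝ :=
  ‖Matrix.toEuclideanCLM (𝕜 := ℝ) M‖

/-- Block average `(1/n) Σᵢ vᵢ` of a vector `v ∈ ℝ^{nd}`. -/
def blockAvg {d n : ℕ} (v : Fin n → EuclideanSpace ℝ (Fin d)) : EuclideanSpace ℝ (Fin d) :=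
  (n : ℝ)⁻¹ • ∑ i, v i

/-- The average `f = (1/n) Σᵢ fᵢ` of the local objective functions. -/
def fAvg {d n : ℕ} (f : Fin n → EuclideanSpace ℝ (Fin d) → ℝ)
    (y : EuclideanSpace ℝ (Fin d)) : ℝ :=
  (n : ℝ)⁻¹ * ∑ i, f i y

/-- Squared consensus error `‖v - 1ₙ ⊗ v̄‖² = Σᵢ ‖vᵢ - v̄‖²`. -/
def consensusSq {d n : ℕ} (v : Fin n → EuclideanSpace ℝ (Fin d)) : ℝ :=
  ∑ i, ‖v i - blockAvg v‖ ^ 2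

lemma taylorBound {d : ℕ} {L : ℝ} (hL : 0 ≤ L) {g : EuclideanSpace ℝ (Fin d) → ℝ}
    (hdiff : Differentiable ℝ g)
    (hlip : ∀ x y, ‖gradient g x - gradient g y‖ ≤ L * ‖x - y‖)
    (z h : EuclideanSpace ℝ (Fin d)) :
    |g (z + h) - g z - ⟪gradient g z, h⟫| ≤ L / 2 * ‖h‖ ^ 2 := by
  have hgrad_cont : Continuous (fun w => gradient g w) := by
    have : LipschitzWith (Real.toNNReal L) (fun w => gradient g w) := by
      apply LipschitzWith.of_dist_le_mul
      intro a b
      simpa [dist_eq_norm, Real.coe_toNNReal L hL] using hlip a b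
    exact this.continuous
  have hline : Continuous (fun s : ℝ => z + s • h) :=
    continuous_const.add (continuous_id.smul continuous_const)
  have hic : Continuous (fun s : ℝ => ⟪gradient g (z + s • h), h⟫) :=
    (hgrad_cont.comp hline).inner continuous_const
  have hderiv : ∀ s : ℝ, HasDerivAt (fun s : ℝ => g (z + s • h))
      ⟪gradient g (z + s • h), h⟫ s := by
    intro s
    have h1 : HasDerivAt (fun s : ℝ => z + s • h) h s := by
      simpa using ((hasDerivAt_id s).smul_const h).const_add z
    have h2 := ((hdiff (z + s • h)).hasGradientAt.hasFDerivAt).comp_hasDerivAt s h1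
    simpa [InnerProductSpace.toDual_apply_apply, Function.comp_def] using h2
  have key : g (z + h) - g z = ∫ s in (0:ℝ)..1, ⟪gradient g (z + s • h), h⟫ := by
    have := intervalIntegral.integral_eq_sub_of_hasDerivAt (f := fun s : ℝ => g (z + s • h))
      (f' := fun s => ⟪gradient g (z + s • h), h⟫) (a := 0) (b := 1)
      (fun s _ => hderiv s) ?_
    · rw [this]; simp
    · exact hic.intervalIntegrable _ _
  have key2 : g (z + h) - g z - ⟪gradient g z, h⟫
      = ∫ s in (0:ℝ)..1, (⟪gradient g (z + s • h), h⟫ - ⟪gradient g z, h⟫) := by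
    rw [intervalIntegral.integral_sub, key]
    · simp
    · exact hic.intervalIntegrable _ _
    · exact intervalIntegrable_const
  rw [key2]
  have bound : ∀ s ∈ Set.Icc (0:ℝ) 1,
      |⟪gradient g (z + s • h), h⟫ - ⟪gradient g z, h⟫| ≤ (L * ‖h‖ ^ 2) * s := by
    intro s hs
    have : ⟪gradient g (z + s • h), h⟫ - ⟪gradient g z, h⟫
        = ⟪gradient g (z + s • h) - gradient g z, h⟫ := by
      rw [inner_sub_left]
    rw [this]
    calc |⟪gradient g (z + s • h) - gradient g z, h⟫|
        ≤ ‖gradient g (z + s • h) - gradient g z‖ * ‖h‖ := abs_real_inner_le_norm _ _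
      _ ≤ (L * ‖z + s • h - z‖) * ‖h‖ := by
          have := hlip (z + s • h) z
          have hh : (0:ℝ) ≤ ‖h‖ := norm_nonneg h
          nlinarith [norm_nonneg (gradient g (z + s • h) - gradient g z)]
      _ = (L * ‖h‖ ^ 2) * s := by
          have : z + s • h - z = s • h := by abel
          rw [this, norm_smul, Real.norm_eq_abs, abs_of_nonneg hs.1]
          ring
  calc |∫ s in (0:ℝ)..1, (⟪gradient g (z + s • h), h⟫ - ⟪gradient g z, h⟫)|
      ≤ ∫ s in (0:ℝ)..1, (L * ‖h‖ ^ 2) * s := by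
        refine le_trans (intervalIntegral.abs_integral_le_integral_abs zero_le_one) ?_
        apply intervalIntegral.integral_mono_on zero_le_one
        · exact ((hic.sub continuous_const).abs).intervalIntegrable _ _
        · exact (continuous_const.mul continuous_id).intervalIntegrable _ _
        · exact bound
    _ = L / 2 * ‖h‖ ^ 2 := by
        rw [intervalIntegral.integral_const_mul, integral_id]
        ring

def sphereMap {d : ℕ} (e : (EuclideanSpace ℝ (Fin d)) ≃ₗᵢ[ℝ] (EuclideanSpace ℝ (Fin d))) (u : sphere (0:(EuclideanSpace ℝ (Fin d))) 1) : sphere (0:(EuclideanSpace ℝ (Fin d))) 1 :=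
  ⟨e u.val, by simp [mem_sphere_zero_iff_norm, norm_eq_of_mem_sphere]⟩

lemma continuous_sphereMap {d : ℕ} (e : (EuclideanSpace ℝ (Fin d)) ≃ₗᵢ[ℝ] (EuclideanSpace ℝ (Fin d))) : Continuous (sphereMap e) :=
  Continuous.subtype_mk (e.continuous.comp continuous_subtype_val) _

lemma map_sphereMap_toSphere {d : ℕ} (e : (EuclideanSpace ℝ (Fin d)) ≃ₗᵢ[ℝ] (EuclideanSpace ℝ (Fin d))) :
    Measure.map (sphereMap e) (volume : Measure (EuclideanSpace ℝ (Fin d))).toSphere = (volume : Measure (EuclideanSpace ℝ (Fin d))).toSphere := by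
  refine Measure.ext fun s hs => ?_
  have hm : Measurable (sphereMap e) := (continuous_sphereMap e).measurable
  rw [Measure.map_apply hm hs, Measure.toSphere_apply' _ (hm hs), Measure.toSphere_apply' _ hs]
  have hset : (Subtype.val '' (sphereMap e ⁻¹' s)) = e ⁻¹' (Subtype.val '' s) := by
    ext w
    constructor
    · rintro ⟨u, hu, rfl⟩
      exact ⟨sphereMap e u, hu, rfl⟩
    · rintro ⟨v, hv, hw⟩
      refine ⟨⟨e.symm v.val, by simp [mem_sphere_zero_iff_norm, norm_eq_of_mem_sphere]⟩, ?_, ?_⟩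
      · show sphereMap e _ ∈ s
        have h2 : sphereMap e ⟨e.symm v.val, by
            simp [mem_sphere_zero_iff_norm, norm_eq_of_mem_sphere]⟩ = v := by
          apply Subtype.ext
          simp [sphereMap]
        rw [h2]; exact hv
      · show e.symm v.val = w
        rw [hw]; simp
  have hsmul : Set.Ioo (0:ℝ) 1 • (e ⁻¹' (Subtype.val '' s)) = e ⁻¹' (Set.Ioo (0:ℝ) 1 • (Subtype.val '' s)) := by
    ext w
    simp only [Set.mem_smul, Set.mem_preimage]
    constructor
    · rintro ⟨r, hr, a, ha, rfl⟩
      exact ⟨r, hr, e a, ha, by simp⟩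
    · rintro ⟨r, hr, a, ha, hra⟩
      refine ⟨r, hr, e.symm a, by simp [ha], ?_⟩
      apply e.injective
      simp [hra]
  have hvol : ∀ B : Set (EuclideanSpace ℝ (Fin d)), volume (e ⁻¹' B) = volume B := by
    intro B
    have h1 : (Measure.map (⇑e) (volume : Measure (EuclideanSpace ℝ (Fin d)))) B = volume (e ⁻¹' B) :=
      MeasurableEquiv.map_apply e.toHomeomorph.toMeasurableEquiv B
    rw [← h1, e.measurePreserving.map_eq]
  rw [hset, hsmul, hvol]

lemma integrable_sphere_fun {d : ℕ} (f : (sphere (0:(EuclideanSpace ℝ (Fin d))) 1) → ℝ) (hf : Continuous f) :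
    Integrable f (volume : Measure (EuclideanSpace ℝ (Fin d))).toSphere := by
  have h := (hf.continuousOn : ContinuousOn f Set.univ).integrableOn_compact
    (μ := (volume : Measure (EuclideanSpace ℝ (Fin d))).toSphere) isCompact_univ
  rwa [IntegrableOn, Measure.restrict_univ] at h

lemma integral_comp_sphereMap {d : ℕ} (e : (EuclideanSpace ℝ (Fin d)) ≃ₗᵢ[ℝ] (EuclideanSpace ℝ (Fin d))) (f : (EuclideanSpace ℝ (Fin d)) → ℝ) (hf : Continuous f) :
    ∫ u : sphere (0:(EuclideanSpace ℝ (Fin d))) 1, f (e u.val) ∂(volume : Measure (EuclideanSpace ℝ (Fin d))).toSphere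
      = ∫ u : sphere (0:(EuclideanSpace ℝ (Fin d))) 1, f u.val ∂(volume : Measure (EuclideanSpace ℝ (Fin d))).toSphere := by
  have h := integral_map (μ := (volume : Measure (EuclideanSpace ℝ (Fin d))).toSphere) (φ := sphereMap e)
    (f := f ∘ Subtype.val) (continuous_sphereMap e).aemeasurable
    ((hf.comp continuous_subtype_val).aestronglyMeasurable)
  rw [map_sphereMap_toSphere] at h
  exact h.symm

lemma inner_sq_basis_integral_eq {d : ℕ} (b : OrthonormalBasis (Fin d) ℝ (EuclideanSpace ℝ (Fin d))) (i j : Fin d) :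
    ∫ u : sphere (0:(EuclideanSpace ℝ (Fin d))) 1, ⟪b i, u.val⟫ ^ 2 ∂(volume : Measure (EuclideanSpace ℝ (Fin d))).toSphere
      = ∫ u : sphere (0:(EuclideanSpace ℝ (Fin d))) 1, ⟪b j, u.val⟫ ^ 2 ∂(volume : Measure (EuclideanSpace ℝ (Fin d))).toSphere := by
  classical
  set e : (EuclideanSpace ℝ (Fin d)) ≃ₗᵢ[ℝ] (EuclideanSpace ℝ (Fin d)) :=
    (b.repr).trans ((LinearIsometryEquiv.piLpCongrLeft 2 ℝ ℝ (Equiv.swap i j)).trans b.repr.symm)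
    with he
  have hebj : e (b j) = b i := by
    rw [he]
    simp only [LinearIsometryEquiv.trans_apply, OrthonormalBasis.repr_self]
    have h1 : (EuclideanSpace.single j (1:ℝ)) = (WithLp.equiv 2 (Fin d → ℝ)).symm (Pi.single j 1) := rfl
    rw [EuclideanSpace.piLpCongrLeft_single]
    have h2 : Equiv.swap i j j = i := Equiv.swap_apply_right i j
    rw [h2]
    exact b.repr_symm_single i
  have hsymm : e.symm (b i) = b j := by rw [← hebj]; simp
  have hcont : Continuous (fun x : (EuclideanSpace ℝ (Fin d)) => ⟪b i, x⟫ ^ 2) :=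
    ((continuous_const.inner continuous_id)).pow 2
  have h := integral_comp_sphereMap e (fun x => ⟪b i, x⟫ ^ 2) hcont
  rw [← h]
  congr 1
  funext u
  show ⟪b i, e u.val⟫ ^ 2 = ⟪b j, u.val⟫ ^ 2
  have : ⟪b i, e u.val⟫ = ⟪e.symm (b i), u.val⟫ := by
    conv_rhs => rw [← LinearIsometryEquiv.inner_map_map e]
    simp
  rw [this, hsymm]

lemma secondMoment {d : ℕ} (hd : 0 < d) (v : (EuclideanSpace ℝ (Fin d))) :
    ∫ u : sphere (0:(EuclideanSpace ℝ (Fin d))) 1, ⟪v, u.val⟫ ^ 2 ∂(volume : Measure (EuclideanSpace ℝ (Fin d))).toSphere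
      = (((volume : Measure (EuclideanSpace ℝ (Fin d))).toSphere Set.univ).toReal / d) * ‖v‖ ^ 2 := by
  classical
  set T : ℝ := (((volume : Measure (EuclideanSpace ℝ (Fin d))).toSphere) Set.univ).toReal with hT
  -- first: unit vectors
  have hunit : ∀ w : (EuclideanSpace ℝ (Fin d)), ‖w‖ = 1 →
      ∫ u : sphere (0:(EuclideanSpace ℝ (Fin d))) 1, ⟪w, u.val⟫ ^ 2 ∂(volume : Measure (EuclideanSpace ℝ (Fin d))).toSphere = T / d := by
    intro w hw
    have horth : Orthonormal ℝ (Set.restrict {(⟨0, hd⟩ : Fin d)} (fun _ : Fin d => w)) := by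
      constructor
      · intro i; exact hw
      · intro i j hij
        exact absurd (Subsingleton.elim i j) hij
    obtain ⟨b, hb⟩ := horth.exists_orthonormalBasis_extension_of_card_eq
      (by simp [finrank_euclideanSpace])
    have hb0 : b ⟨0, hd⟩ = w := hb _ rfl
    have hint : ∀ i : Fin d, Integrable (fun u : sphere (0:(EuclideanSpace ℝ (Fin d))) 1 => ⟪b i, u.val⟫ ^ 2)
        (volume : Measure (EuclideanSpace ℝ (Fin d))).toSphere := fun i =>
      integrable_sphere_fun _ (((continuous_const.inner continuous_subtype_val)).pow 2)
    have hsum : ∑ i, ∫ u : sphere (0:(EuclideanSpace ℝ (Fin d))) 1, ⟪b i, u.val⟫ ^ 2 ∂(volume : Measure (EuclideanSpace ℝ (Fin d))).toSphere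
        = T := by
      rw [← integral_finset_sum _ (fun i _ => hint i)]
      have : ∀ u : sphere (0:(EuclideanSpace ℝ (Fin d))) 1, ∑ i, ⟪b i, u.val⟫ ^ 2 = 1 := by
        intro u
        have h1 := b.sum_inner_mul_inner u.val u.val
        have h2 : ∀ i, ⟪u.val, b i⟫ * ⟪b i, u.val⟫ = ⟪b i, u.val⟫ ^ 2 := by
          intro i; rw [real_inner_comm]; ring
        rw [Finset.sum_congr rfl (fun i _ => h2 i)] at h1
        rw [h1, real_inner_self_eq_norm_sq, norm_eq_of_mem_sphere u]
        norm_num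
      rw [integral_congr_ae (Filter.Eventually.of_forall (fun u => this u))]
      simp [hT]
      exact Or.inl rfl
    have hconst : ∀ i : Fin d,
        ∫ u : sphere (0:(EuclideanSpace ℝ (Fin d))) 1, ⟪b i, u.val⟫ ^ 2 ∂(volume : Measure (EuclideanSpace ℝ (Fin d))).toSphere
          = ∫ u : sphere (0:(EuclideanSpace ℝ (Fin d))) 1, ⟪w, u.val⟫ ^ 2 ∂(volume : Measure (EuclideanSpace ℝ (Fin d))).toSphere := by
      intro i
      rw [← hb0]
      exact inner_sq_basis_integral_eq b i ⟨0, hd⟩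
    rw [Finset.sum_congr rfl (fun i _ => hconst i), Finset.sum_const, Finset.card_univ,
      Fintype.card_fin, nsmul_eq_mul] at hsum
    field_simp at hsum ⊢
    linarith [hsum]
  by_cases hv : v = 0
  · simp [hv]
  · have hnv : ‖v‖ ≠ 0 := norm_ne_zero_iff.mpr hv
    set w : (EuclideanSpace ℝ (Fin d)) := ‖v‖⁻¹ • v with hwdef
    have hw : ‖w‖ = 1 := by
      rw [hwdef, norm_smul, norm_inv, norm_norm, inv_mul_cancel₀ hnv]
    have hvw : ∀ u : (EuclideanSpace ℝ (Fin d)), ⟪v, u⟫ ^ 2 = ‖v‖ ^ 2 * ⟪w, u⟫ ^ 2 := by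
      intro u
      rw [hwdef, real_inner_smul_left]
      field_simp
    calc ∫ u : sphere (0:(EuclideanSpace ℝ (Fin d))) 1, ⟪v, u.val⟫ ^ 2 ∂(volume : Measure (EuclideanSpace ℝ (Fin d))).toSphere
        = ∫ u : sphere (0:(EuclideanSpace ℝ (Fin d))) 1, ‖v‖ ^ 2 * ⟪w, u.val⟫ ^ 2 ∂(volume : Measure (EuclideanSpace ℝ (Fin d))).toSphere := by
          exact integral_congr_ae (Filter.Eventually.of_forall (fun u => hvw u.val))
      _ = ‖v‖ ^ 2 * (T / d) := by
          rw [integral_const_mul, hunit w hw]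
      _ = (T / d) * ‖v‖ ^ 2 := by ring

set_option maxHeartbeats 1600000 in
/-- inequality (4.5) of the paper. For an `L`-smooth `g : ℝ^d → ℝ`, `t > 0`
and `u` uniform on `S_{d−1}`, for any `x, y`:
`E_u‖∇̂g(x;u) − ∇̂g(y;u)‖² ≤ (3/2)d²L²t² + 3dL²‖x − y‖²`. -/
theorem statement9 {d : ℕ} (hd : 0 < d) (L : ℝ) (g : EuclideanSpace ℝ (Fin d) → ℝ)
    (hg : LSmooth L g) (t : ℝ) (ht : 0 < t) (x y : EuclideanSpace ℝ (Fin d)) :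
    ∫ u, ‖((d : ℝ) * ((g (x + t • u) - g (x - t • u)) / (2 * t))) • u
          - ((d : ℝ) * ((g (y + t • u) - g (y - t • u)) / (2 * t))) • u‖ ^ 2
        ∂(uniformSphere d)
      ≤ (3 / 2) * (d : ℝ) ^ 2 * L ^ 2 * t ^ 2 + 3 * (d : ℝ) * L ^ 2 * ‖x - y‖ ^ 2 := by
  classical
  set μS := (volume : Measure (EuclideanSpace ℝ (Fin d))).toSphere with hμS
  set T : ℝ := (μS Set.univ).toReal with hT
  set Δ : EuclideanSpace ℝ (Fin d) := gradient g x - gradient g y with hΔ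
  set F : EuclideanSpace ℝ (Fin d) → ℝ := fun u =>
    ‖((d : ℝ) * ((g (x + t • u) - g (x - t • u)) / (2 * t))) • u
      - ((d : ℝ) * ((g (y + t • u) - g (y - t • u)) / (2 * t))) • u‖ ^ 2 with hF
  have hgc : Continuous g := hg.1.continuous
  have hFc : Continuous F := by
    apply Continuous.pow
    apply Continuous.norm
    apply Continuous.sub <;>
    · apply Continuous.fun_smul _ continuous_id
      apply Continuous.mul continuous_const
      apply Continuous.div_const
      fun_prop
  have hμuniv : μS Set.univ = d * volume (Metric.ball (0 : EuclideanSpace ℝ (Fin d)) 1) := by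
    rw [hμS, Measure.toSphere_apply_univ, finrank_euclideanSpace, Fintype.card_fin]
  have hμne : μS Set.univ ≠ 0 := by
    rw [hμuniv]
    exact mul_ne_zero (by simpa using hd.ne') (measure_ball_pos volume 0 one_pos).ne'
  have hμtop : μS Set.univ ≠ ⊤ := measure_ne_top _ _
  have hTpos : 0 < T := ENNReal.toReal_pos hμne hμtop
  -- rewrite the integral over uniformSphere
  have hrw : ∫ u, F u ∂(uniformSphere d)
      = T⁻¹ * ∫ u : sphere (0 : EuclideanSpace ℝ (Fin d)) 1, F u.val ∂μS := by
    rw [uniformSphere, integral_smul_measure,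
        integral_map (by fun_prop) hFc.aestronglyMeasurable, ENNReal.toReal_inv]
    rfl
  -- pointwise bound on the sphere
  have hlip : ∀ a b, ‖gradient g a - gradient g b‖ ≤ |L| * ‖a - b‖ := fun a b =>
    (hg.2 a b).trans (mul_le_mul_of_nonneg_right (le_abs_self L) (norm_nonneg _))
  have hptwise : ∀ u : EuclideanSpace ℝ (Fin d), ‖u‖ = 1 →
      F u ≤ 3 * (d:ℝ)^2 * ⟪Δ, u⟫ ^ 2 + (3/2) * (d:ℝ)^2 * L^2 * t^2 := by
    intro u hu
    have htu : ‖t • u‖ = t := by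
      rw [norm_smul, hu, Real.norm_eq_abs, abs_of_pos ht, mul_one]
    have hA1 := taylorBound (abs_nonneg L) hg.1 hlip x (t • u)
    have hA2 := taylorBound (abs_nonneg L) hg.1 hlip x (-(t • u))
    have hB1 := taylorBound (abs_nonneg L) hg.1 hlip y (t • u)
    have hB2 := taylorBound (abs_nonneg L) hg.1 hlip y (-(t • u))
    rw [htu] at hA1 hB1
    rw [norm_neg, htu] at hA2 hB2
    have hxtu : x + -(t • u) = x - t • u := by abel
    have hytu : y + -(t • u) = y - t • u := by abel
    rw [hxtu] at hA2; rw [hytu] at hB2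
    have hinx : ⟪gradient g x, -(t • u)⟫ = - (t * ⟪gradient g x, u⟫) := by
      rw [inner_neg_right, real_inner_smul_right]
    have hiny : ⟪gradient g y, -(t • u)⟫ = - (t * ⟪gradient g y, u⟫) := by
      rw [inner_neg_right, real_inner_smul_right]
    have hinx' : ⟪gradient g x, t • u⟫ = t * ⟪gradient g x, u⟫ := real_inner_smul_right _ _ _
    have hiny' : ⟪gradient g y, t • u⟫ = t * ⟪gradient g y, u⟫ := real_inner_smul_right _ _ _
    rw [hinx'] at hA1
    rw [hinx] at hA2
    rw [hiny'] at hB1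
    rw [hiny] at hB2
    -- F u = (A)^2 with A = d * (δ / (2t))
    have hFu : F u = ((d : ℝ) * ((g (x + t • u) - g (x - t • u)) / (2 * t))
        - (d : ℝ) * ((g (y + t • u) - g (y - t • u)) / (2 * t))) ^ 2 := by
      rw [hF]
      simp only [← sub_smul, norm_smul, Real.norm_eq_abs, hu, mul_one, sq_abs]
    rw [hFu]
    have hΔu : ⟪Δ, u⟫ = ⟪gradient g x, u⟫ - ⟪gradient g y, u⟫ := by
      rw [hΔ, inner_sub_left]
    rw [hΔu]
    set a1 := g (x + t • u) - g x - t * ⟪gradient g x, u⟫ with ha1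
    set a2 := g (x - t • u) - g x - -(t * ⟪gradient g x, u⟫) with ha2
    set b1 := g (y + t • u) - g y - t * ⟪gradient g y, u⟫ with hb1
    set b2 := g (y - t • u) - g y - -(t * ⟪gradient g y, u⟫) with hb2
    have hgx : g (x + t • u) - g (x - t • u) = 2 * t * ⟪gradient g x, u⟫ + (a1 - a2) := by
      rw [ha1, ha2]; ring
    have hgy : g (y + t • u) - g (y - t • u) = 2 * t * ⟪gradient g y, u⟫ + (b1 - b2) := by
      rw [hb1, hb2]; ring
    rw [hgx, hgy]
    have ht' : (2 : ℝ) * t ≠ 0 := by positivity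
    have hexp : (d : ℝ) * ((2 * t * ⟪gradient g x, u⟫ + (a1 - a2)) / (2 * t))
        - (d : ℝ) * ((2 * t * ⟪gradient g y, u⟫ + (b1 - b2)) / (2 * t))
        = (d : ℝ) * (⟪gradient g x, u⟫ - ⟪gradient g y, u⟫)
          + (d : ℝ) * ((a1 - a2) - (b1 - b2)) / (2 * t) := by
      field_simp
      ring
    rw [hexp]
    set P := (d : ℝ) * (⟪gradient g x, u⟫ - ⟪gradient g y, u⟫) with hP
    set Q := (d : ℝ) * ((a1 - a2) - (b1 - b2)) / (2 * t) with hQ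
    have hQbound : |Q| ≤ (d : ℝ) * |L| * t := by
      rw [hQ, abs_div, abs_mul]
      rw [abs_of_pos (by positivity : (0:ℝ) < 2 * t)]
      rw [div_le_iff₀ (by positivity)]
      have habs : |(a1 - a2) - (b1 - b2)| ≤ 2 * |L| * t^2 := by
        have h1 : |a1 - a2| ≤ |L| * t ^ 2 := by
          calc |a1 - a2| ≤ |a1| + |a2| := abs_sub a1 a2
            _ ≤ |L| / 2 * t ^ 2 + |L| / 2 * t ^ 2 := add_le_add hA1 hA2
            _ = |L| * t ^ 2 := by ring
        have h2 : |b1 - b2| ≤ |L| * t ^ 2 := by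
          calc |b1 - b2| ≤ |b1| + |b2| := abs_sub b1 b2
            _ ≤ |L| / 2 * t ^ 2 + |L| / 2 * t ^ 2 := add_le_add hB1 hB2
            _ = |L| * t ^ 2 := by ring
        calc |(a1 - a2) - (b1 - b2)| ≤ |a1 - a2| + |b1 - b2| := abs_sub _ _
          _ ≤ 2 * |L| * t ^ 2 := by linarith
      have hd' : |(d : ℝ)| = (d : ℝ) := abs_of_nonneg (Nat.cast_nonneg d)
      rw [hd']
      calc (d:ℝ) * |a1 - a2 - (b1 - b2)| ≤ (d:ℝ) * (2 * |L| * t^2) :=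
            mul_le_mul_of_nonneg_left habs (Nat.cast_nonneg d)
        _ = (d:ℝ) * |L| * t * (2 * t) := by ring
    have genlem : ∀ p q c : ℝ, |q| ≤ c → (p + q) ^ 2 ≤ 3 * p ^ 2 + (3/2) * c ^ 2 := by
      intro p q c h
      have hq2 : q ^ 2 ≤ c ^ 2 := sq_le_sq' (neg_le_of_abs_le h) (le_of_abs_le h)
      nlinarith [sq_nonneg (2 * p - q)]
    calc (P + Q) ^ 2 ≤ 3 * P ^ 2 + (3/2) * ((d:ℝ) * |L| * t) ^ 2 := genlem P Q _ hQbound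
      _ = 3 * (d:ℝ)^2 * (⟪gradient g x, u⟫ - ⟪gradient g y, u⟫)^2 + (3/2)*(d:ℝ)^2*L^2*t^2 := by
          rw [hP, show ((d:ℝ) * |L| * t)^2 = (d:ℝ)^2 * L^2 * t^2 by
            rw [mul_pow, mul_pow, sq_abs]]
          ring
  rw [hrw]
  have hΔle : ‖Δ‖ ≤ |L| * ‖x - y‖ := hlip x y
  have hcontΔ : Continuous (fun v : EuclideanSpace ℝ (Fin d) => ⟪Δ, v⟫ ^ 2) :=
    (continuous_const.inner continuous_id).pow 2
  have hint1 : Integrable (fun u : sphere (0 : EuclideanSpace ℝ (Fin d)) 1 => F u.val) μS :=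
    integrable_sphere_fun _ (hFc.comp continuous_subtype_val)
  have hint2 : Integrable (fun u : sphere (0 : EuclideanSpace ℝ (Fin d)) 1 =>
      3 * (d:ℝ)^2 * ⟪Δ, u.val⟫ ^ 2 + (3/2) * (d:ℝ)^2 * L^2 * t^2) μS :=
    integrable_sphere_fun _
      ((continuous_const.mul (hcontΔ.comp continuous_subtype_val)).add continuous_const)
  have hmono : ∫ u : sphere (0 : EuclideanSpace ℝ (Fin d)) 1, F u.val ∂μS
      ≤ ∫ u : sphere (0 : EuclideanSpace ℝ (Fin d)) 1,
          (3 * (d:ℝ)^2 * ⟪Δ, u.val⟫ ^ 2 + (3/2) * (d:ℝ)^2 * L^2 * t^2) ∂μS :=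
    integral_mono hint1 hint2 (fun u => hptwise u.val (norm_eq_of_mem_sphere u))
  have hval : ∫ u : sphere (0 : EuclideanSpace ℝ (Fin d)) 1,
        (3 * (d:ℝ)^2 * ⟪Δ, u.val⟫ ^ 2 + (3/2) * (d:ℝ)^2 * L^2 * t^2) ∂μS
      = 3 * (d:ℝ)^2 * ((T / d) * ‖Δ‖^2) + T * ((3/2) * (d:ℝ)^2 * L^2 * t^2) := by
    have hintA : Integrable (fun u : sphere (0 : EuclideanSpace ℝ (Fin d)) 1 => ⟪Δ, u.val⟫ ^ 2) μS :=
      integrable_sphere_fun _ ((continuous_const.inner continuous_subtype_val).pow 2)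
    rw [integral_add (hintA.const_mul _) (integrable_const _),
        integral_const_mul, secondMoment hd Δ, integral_const]
    simp only [smul_eq_mul, hT, Measure.real, ← hμS]
    try ring
  have hd0 : (0:ℝ) < d := by exact_mod_cast hd
  have hL2 : ‖Δ‖^2 ≤ L^2 * ‖x - y‖^2 := by
    nlinarith [hΔle, norm_nonneg Δ, abs_nonneg L, norm_nonneg (x - y), sq_abs L]
  calc T⁻¹ * ∫ u : sphere (0 : EuclideanSpace ℝ (Fin d)) 1, F u.val ∂μS
      ≤ T⁻¹ * (3 * (d:ℝ)^2 * ((T / d) * ‖Δ‖^2) + T * ((3/2) * (d:ℝ)^2 * L^2 * t^2)) := by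
        apply mul_le_mul_of_nonneg_left _ (inv_nonneg.mpr hTpos.le)
        rw [← hval]; exact hmono
    _ = 3 * (d:ℝ) * ‖Δ‖^2 + (3/2) * (d:ℝ)^2 * L^2 * t^2 := by
        field_simp
    _ ≤ (3 / 2) * (d : ℝ) ^ 2 * L ^ 2 * t ^ 2 + 3 * (d : ℝ) * L ^ 2 * ‖x - y‖ ^ 2 := by
        nlinarith [hL2, hd0.le]
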